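/- Let M be a Riemannian manifold and φ : M → ℝ a smooth function satisfying Δφ ≥ |∇φ|² pointwise. Then for any Lipschitz function ξ with compact support on M, ∫_M |∇φ|² ξ² dμ ≤ 4 ∫_M |∇ξ|² dμ. -/

import Mathlib

set_option maxHeartbeats 1000000

open MeasureTheory EuclideanSpace

section AuxiliaryLemmas

open Filter Topology Metric Set

variable {n : ℕ}

local notation "E" => EuclideanSpace ℝ (Fin n)

lemma aux_integrable {h : E → ℝ} (hm : AEStronglyMeasurable h volume) {C : ℝ}
    {s : Set E} (hs : IsCompact s)
    (hb : ∀ x, ‖h x‖ ≤ s.indicator (fun _ => C) x) : Integrable h := by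
  refine Integrable.mono' ?_ hm (Filter.Eventually.of_forall hb)
  exact (integrable_indicator_iff hs.measurableSet).2
    (integrableOn_const hs.measure_lt_top.ne)

lemma fderiv_zero_of_nmem_tsupport {h : E → ℝ} {x : E} (hx : x ∉ tsupport h) :
    fderiv ℝ h x = 0 := by
  have h1 : h =ᶠ[𝓝 x] 0 := notMem_tsupport_iff_eventuallyEq.1 hx
  rw [h1.fderiv_eq]
  exact fderiv_const_apply 0

lemma ibp_dir (F : E → ℝ) (K : NNReal) (hF : LipschitzWith K F)
    (hs : HasCompactSupport F) (v : E) :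
    ∫ x, fderiv ℝ F x v = 0 := by
  have hFc : Continuous F := hF.continuous
  have hFint : Integrable F := hFc.integrable_of_hasCompactSupport hs
  set g : ℕ → E → ℝ := fun k x => ((k : ℝ) + 1) * (F (x + ((k : ℝ) + 1)⁻¹ • v) - F x) with hg
  have hpos : ∀ k : ℕ, (0:ℝ) < (k:ℝ) + 1 := fun k => by positivity
  have h0 : ∀ k, ∫ x, g k x = 0 := by
    intro k
    have h1 : Integrable (fun x => F (x + ((k : ℝ) + 1)⁻¹ • v)) := hFint.comp_add_right _
    simp only [hg]
    rw [integral_const_mul, integral_sub h1 hFint, integral_add_right_eq_self F _]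
    simp
  set S : Set E := Metric.cthickening ‖v‖ (tsupport F) with hS
  have hScomp : IsCompact S := hs.cthickening
  set bound : E → ℝ := S.indicator (fun _ => (K : ℝ) * ‖v‖) with hbound
  have hbound_int : Integrable bound :=
    (integrable_indicator_iff hScomp.measurableSet).2
      (integrableOn_const hScomp.measure_lt_top.ne)
  have hmeas : ∀ k, AEStronglyMeasurable (g k) volume := by
    intro k
    exact (continuous_const.mul
      ((hFc.comp (continuous_id.add continuous_const)).sub hFc)).aestronglyMeasurable
  have h_bound : ∀ k, ∀ᵐ x, ‖g k x‖ ≤ bound x := by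
    intro k
    refine Filter.Eventually.of_forall fun x => ?_
    by_cases hx : x ∈ S
    · rw [hbound, Set.indicator_of_mem hx]
      have h1 : dist (F (x + ((k : ℝ) + 1)⁻¹ • v)) (F x) ≤ K * (((k:ℝ)+1)⁻¹ * ‖v‖) := by
        have := hF.dist_le_mul (x + ((k : ℝ) + 1)⁻¹ • v) x
        simpa [dist_eq_norm, norm_smul, abs_of_pos (hpos k),
          abs_of_pos (inv_pos.2 (hpos k))] using this
      have h2 : ‖g k x‖ = ((k:ℝ)+1) * dist (F (x + ((k : ℝ) + 1)⁻¹ • v)) (F x) := by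
        rw [Real.dist_eq, Real.norm_eq_abs]
        simp only [hg]
        rw [abs_mul, abs_of_pos (hpos k)]
      rw [h2]
      have h3 : ((k:ℝ)+1) * dist (F (x + ((k : ℝ) + 1)⁻¹ • v)) (F x)
          ≤ ((k:ℝ)+1) * ((K : ℝ) * (((k:ℝ)+1)⁻¹ * ‖v‖)) :=
        mul_le_mul_of_nonneg_left h1 (hpos k).le
      have h4 : ((k:ℝ)+1) * ((K : ℝ) * (((k:ℝ)+1)⁻¹ * ‖v‖)) = (K:ℝ) * ‖v‖ := by
        field_simp
      linarith
    · rw [hbound, Set.indicator_of_notMem hx]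
      have hxs : x ∉ tsupport F := fun h => hx (self_subset_cthickening _ h)
      have hx2 : x + ((k : ℝ) + 1)⁻¹ • v ∉ tsupport F := by
        intro hmem
        apply hx
        apply Metric.mem_cthickening_of_dist_le x (x + ((k : ℝ) + 1)⁻¹ • v) _ _ hmem
        rw [dist_eq_norm]
        have hxx : x - (x + ((k : ℝ) + 1)⁻¹ • v) = -(((k : ℝ) + 1)⁻¹ • v) := by abel
        rw [hxx, norm_neg, norm_smul, Real.norm_eq_abs, abs_inv, abs_of_pos (hpos k)]
        calc ((k:ℝ)+1)⁻¹ * ‖v‖ ≤ 1 * ‖v‖ := by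
              apply mul_le_mul_of_nonneg_right _ (norm_nonneg v)
              rw [inv_le_one_iff₀]; right; linarith [hpos k]
          _ = ‖v‖ := one_mul _
      have e1 : F x = 0 := image_eq_zero_of_notMem_tsupport hxs
      have e2 : F (x + ((k : ℝ) + 1)⁻¹ • v) = 0 := image_eq_zero_of_notMem_tsupport hx2
      simp [hg, e1, e2]
  have hlim : ∀ᵐ x, Tendsto (fun k => g k x) atTop (𝓝 (fderiv ℝ F x v)) := by
    filter_upwards [hF.ae_differentiableAt (μ := volume)] with x hx
    have hline : HasDerivAt (fun t : ℝ => x + t • v) v 0 := by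
      simpa using ((hasDerivAt_id (0:ℝ)).smul_const v).const_add x
    have hd : HasDerivAt (fun t : ℝ => F (x + t • v)) (fderiv ℝ F x v) 0 := by
      have hFx : HasFDerivAt F (fderiv ℝ F x) ((fun t : ℝ => x + t • v) 0) := by
        simpa using hx.hasFDerivAt
      exact hFx.comp_hasDerivAt 0 hline
    rw [hasDerivAt_iff_tendsto_slope] at hd
    have hseq : Tendsto (fun k : ℕ => ((k:ℝ)+1)⁻¹) atTop (𝓝[≠] (0:ℝ)) := by
      apply tendsto_nhdsWithin_of_tendsto_nhds_of_eventually_within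
      · simpa [one_div] using tendsto_one_div_add_atTop_nhds_zero_nat (𝕜 := ℝ)
      · exact Filter.Eventually.of_forall fun k => by
          simp [Set.mem_compl_iff, inv_eq_zero]
          positivity
    have := hd.comp hseq
    refine this.congr fun k => ?_
    simp only [Function.comp_apply, slope_def_field]
    rw [hg]
    simp only [zero_smul, add_zero, sub_zero]
    rw [div_eq_mul_inv, inv_inv]
    ring
  have hmain := tendsto_integral_of_dominated_convergence bound hmeas hbound_int h_bound hlim
  have h2 : Tendsto (fun k => ∫ x, g k x) atTop (𝓝 (0:ℝ)) := by
    simpa [h0] using (tendsto_const_nhds : Tendsto (fun _ : ℕ => (0:ℝ)) atTop (𝓝 0))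
  exact tendsto_nhds_unique hmain h2

lemma bounded_of_compactsupport {f : E → ℝ} (hf : Continuous f)
    (hfs : HasCompactSupport f) : ∃ M : ℝ, 0 ≤ M ∧ ∀ x, |f x| ≤ M := by
  obtain ⟨C, hC⟩ := hfs.exists_bound_of_continuousOn hf.continuousOn
  refine ⟨max C 0, le_max_right _ _, fun x => ?_⟩
  by_cases hx : x ∈ tsupport f
  · rw [← Real.norm_eq_abs]
    exact (hC x hx).trans (le_max_left _ _)
  · rw [image_eq_zero_of_notMem_tsupport hx]
    simp

lemma lipschitz_mul {f g : E → ℝ} (Kf : NNReal)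
    (hf : LipschitzWith Kf f) (hfs : HasCompactSupport f)
    (hgd : Differentiable ℝ g) (hgc : Continuous (fderiv ℝ g)) :
    ∃ Km : NNReal, LipschitzWith Km (fun x => f x * g x) := by
  obtain ⟨R, hR⟩ := hfs.isBounded.subset_closedBall 0
  set R' := max R 0 with hR'
  set B : Set E := Metric.closedBall 0 R' with hB
  have hBsub : tsupport f ⊆ B := hR.trans (Metric.closedBall_subset_closedBall (le_max_left _ _))
  have hBcomp : IsCompact B := isCompact_closedBall 0 R'
  obtain ⟨Cg0, hCg0⟩ := hBcomp.exists_bound_of_continuousOn hgd.continuous.continuousOn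
  set Cg := max Cg0 0 with hCg
  have hCgB : ∀ x ∈ B, |g x| ≤ Cg := fun x hx => by
    rw [← Real.norm_eq_abs]
    exact (hCg0 x hx).trans (le_max_left _ _)
  obtain ⟨Lg0, hLg0⟩ := hBcomp.exists_bound_of_continuousOn hgc.continuousOn
  set Lg := max Lg0 0 with hLg
  have hLgB : ∀ x ∈ B, ‖fderiv ℝ g x‖ ≤ Lg := fun x hx => (hLg0 x hx).trans (le_max_left _ _)
  obtain ⟨Mf, hMf0, hMf⟩ := bounded_of_compactsupport hf.continuous hfs
  have hgl : ∀ x ∈ B, ∀ y ∈ B, |g x - g y| ≤ Lg * ‖x - y‖ := by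
    intro x hx y hy
    have := (convex_closedBall (0:E) R').norm_image_sub_le_of_norm_fderiv_le
      (fun z _ => hgd z) (fun z hz => hLgB z hz) hy hx
    simpa [Real.norm_eq_abs] using this
  set C : ℝ := Kf * Cg + Mf * Lg with hC
  have hC0 : 0 ≤ C := by positivity
  have main : ∀ x ∈ B, ∀ y, |f x * g x - f y * g y| ≤ C * ‖x - y‖ := by
    intro x hx y
    by_cases hy : y ∈ B
    · have h1 : |f x - f y| ≤ Kf * ‖x - y‖ := by
        simpa [Real.dist_eq, dist_eq_norm] using hf.dist_le_mul x y
      have h2 : |g x - g y| ≤ Lg * ‖x - y‖ := hgl x hx y hy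
      have h3 : f x * g x - f y * g y = (f x - f y) * g x + f y * (g x - g y) := by ring
      rw [h3]
      calc |(f x - f y) * g x + f y * (g x - g y)|
          ≤ |(f x - f y) * g x| + |f y * (g x - g y)| := abs_add_le _ _
        _ = |f x - f y| * |g x| + |f y| * |g x - g y| := by rw [abs_mul, abs_mul]
        _ ≤ (Kf * ‖x - y‖) * Cg + Mf * (Lg * ‖x - y‖) := by
            have hgx := hCgB x hx
            have h4 : (0:ℝ) ≤ |f x - f y| := abs_nonneg _
            have h5 : (0:ℝ) ≤ |f y| := abs_nonneg _
            have h6 : (0:ℝ) ≤ Kf * ‖x - y‖ := by positivity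
            exact add_le_add (mul_le_mul h1 hgx (abs_nonneg _) h6)
              (mul_le_mul (hMf y) h2 (abs_nonneg _) hMf0)
        _ = C * ‖x - y‖ := by rw [hC]; ring
    · have hfy : f y = 0 := image_eq_zero_of_notMem_tsupport (fun h => hy (hBsub h))
      have h1 : |f x - f y| ≤ Kf * ‖x - y‖ := by
        simpa [Real.dist_eq, dist_eq_norm] using hf.dist_le_mul x y
      have hgx := hCgB x hx
      rw [hfy]
      calc |f x * g x - 0 * g y| = |f x - f y| * |g x| := by rw [hfy, ← abs_mul]; ring_nf
        _ ≤ (Kf * ‖x - y‖) * Cg := mul_le_mul h1 hgx (abs_nonneg _) (by positivity)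
        _ ≤ C * ‖x - y‖ := by
            rw [hC]
            have : (0:ℝ) ≤ Mf * Lg * ‖x - y‖ := by positivity
            nlinarith [norm_nonneg (x - y)]
  refine ⟨C.toNNReal, LipschitzWith.of_dist_le_mul fun x y => ?_⟩
  rw [Real.coe_toNNReal _ hC0, Real.dist_eq, dist_eq_norm]
  by_cases hx : x ∈ B
  · exact main x hx y
  · by_cases hy : y ∈ B
    · rw [abs_sub_comm, ← norm_sub_rev]
      exact main y hy x
    · have hfx : f x = 0 := image_eq_zero_of_notMem_tsupport (fun h => hx (hBsub h))
      have hfy : f y = 0 := image_eq_zero_of_notMem_tsupport (fun h => hy (hBsub h))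
      simp [hfx, hfy]
      positivity


end AuxiliaryLemmas

/-- Key integral estimate: if a smooth function `φ` satisfies `Δφ ≥ |∇φ|²` pointwise,
then for any Lipschitz `ξ` with compact support, `∫ |∇φ|² ξ² ≤ 4 ∫ |∇ξ|²`
(Euclidean model of a Riemannian manifold). -/
theorem integral_gradient_sq_le (n : ℕ) (φ ξ : EuclideanSpace ℝ (Fin n) → ℝ)
    (hφ : ContDiff ℝ (⊤ : ℕ∞) φ)
    (hineq : ∀ x, ‖gradient φ x‖^2 ≤ ∑ i, iteratedFDeriv ℝ 2 φ x
      ![EuclideanSpace.single i (1:ℝ), EuclideanSpace.single i (1:ℝ)])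
    (K : NNReal) (hξ : LipschitzWith K ξ) (hsupp : HasCompactSupport ξ) :
    ∫ x, ‖gradient φ x‖^2 * (ξ x)^2 ≤ 4 * ∫ x, ‖gradient ξ x‖^2 := by
  classical
  have hξc : Continuous ξ := hξ.continuous
  have hφd : Differentiable ℝ φ := hφ.differentiable (by simp)
  have hΦ : ContDiff ℝ (⊤ : ℕ∞) (fderiv ℝ φ) := hφ.fderiv_right (by simp)
  have hΦd : Differentiable ℝ (fderiv ℝ φ) := hΦ.differentiable (by simp)
  have hΦc : Continuous (fderiv ℝ φ) := hΦ.continuous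
  have hD2c : Continuous (fderiv ℝ (fderiv ℝ φ)) := hΦ.continuous_fderiv (by simp)
  set e : Fin n → EuclideanSpace ℝ (Fin n) := fun i => EuclideanSpace.single i 1 with he
  -- gradient facts
  have hgrad_inner : ∀ (h : EuclideanSpace ℝ (Fin n) → ℝ) (x v : EuclideanSpace ℝ (Fin n)),
      (inner ℝ (gradient h x) v : ℝ) = fderiv ℝ h x v := by
    intro h x v
    rw [gradient]
    exact InnerProductSpace.toDual_symm_apply
  have hgrad_apply : ∀ (h : EuclideanSpace ℝ (Fin n) → ℝ) (x : EuclideanSpace ℝ (Fin n)) i,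
      gradient h x i = fderiv ℝ h x (e i) := by
    intro h x i
    rw [← hgrad_inner h x (e i), he]
    simp only [EuclideanSpace.inner_single_right]
    simp
  have hnorm_sq : ∀ w : EuclideanSpace ℝ (Fin n), ‖w‖^2 = ∑ i, (w i)^2 := by
    intro w
    rw [EuclideanSpace.norm_eq, Real.sq_sqrt (by positivity)]
    simp [Real.norm_eq_abs, sq_abs]
  -- second derivative rewrite
  have hsecond : ∀ (x : EuclideanSpace ℝ (Fin n)) i, iteratedFDeriv ℝ 2 φ x ![e i, e i]
      = fderiv ℝ (fderiv ℝ φ) x (e i) (e i) := by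
    intro x i
    rw [iteratedFDeriv_two_apply]
    simp [Matrix.cons_val_zero, Matrix.cons_val_one, Matrix.head_cons]
  -- component functions
  set g : Fin n → EuclideanSpace ℝ (Fin n) → ℝ := fun i x => fderiv ℝ φ x (e i) with hgdef
  have hgD : ∀ i (x : EuclideanSpace ℝ (Fin n)), HasFDerivAt (g i)
      ((ContinuousLinearMap.apply ℝ ℝ (e i)).comp (fderiv ℝ (fderiv ℝ φ) x)) x := by
    intro i x
    exact (ContinuousLinearMap.apply ℝ ℝ (e i)).hasFDerivAt.comp x (hΦd x).hasFDerivAt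
  have hgdiff : ∀ i, Differentiable ℝ (g i) := fun i x => (hgD i x).differentiableAt
  have hgfderiv : ∀ i, fderiv ℝ (g i) = fun x =>
      (ContinuousLinearMap.apply ℝ ℝ (e i)).comp (fderiv ℝ (fderiv ℝ φ) x) :=
    fun i => funext fun x => (hgD i x).fderiv
  have hgfc : ∀ i, Continuous (fderiv ℝ (g i)) := by
    intro i
    rw [hgfderiv i]
    have hc : Continuous ((ContinuousLinearMap.compL ℝ (EuclideanSpace ℝ (Fin n))
        (EuclideanSpace ℝ (Fin n) →L[ℝ] ℝ) ℝ (ContinuousLinearMap.apply ℝ ℝ (e i)))) :=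
      ContinuousLinearMap.continuous _
    have := hc.comp hD2c
    exact this
  -- ξ·ξ is Lipschitz with compact support
  obtain ⟨Mξ, hMξ0, hMξ⟩ := bounded_of_compactsupport hξc hsupp
  have hsq_supp : HasCompactSupport (fun x => ξ x * ξ x) := by
    apply HasCompactSupport.mono' hsupp
    intro x hx
    apply subset_tsupport
    simp only [Function.mem_support, ne_eq] at hx ⊢
    intro h0
    apply hx
    simp [h0]
  have hsq_lip : ∃ Ks : NNReal, LipschitzWith Ks (fun x => ξ x * ξ x) := by
    refine ⟨(2 * Mξ * (K:ℝ)).toNNReal, LipschitzWith.of_dist_le_mul fun x y => ?_⟩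
    rw [Real.coe_toNNReal _ (by positivity), Real.dist_eq]
    have h1 : |ξ x - ξ y| ≤ (K:ℝ) * dist x y := by
      simpa [Real.dist_eq] using hξ.dist_le_mul x y
    have h2 : |ξ x + ξ y| ≤ 2 * Mξ := by
      calc |ξ x + ξ y| ≤ |ξ x| + |ξ y| := abs_add_le _ _
        _ ≤ 2 * Mξ := by linarith [hMξ x, hMξ y]
    calc |ξ x * ξ x - ξ y * ξ y| = |ξ x + ξ y| * |ξ x - ξ y| := by
          rw [← abs_mul]; ring_nf
      _ ≤ (2 * Mξ) * ((K:ℝ) * dist x y) :=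
          mul_le_mul h2 h1 (abs_nonneg _) (by positivity)
      _ = 2 * Mξ * (K:ℝ) * dist x y := by ring
  obtain ⟨Ks, hKs⟩ := hsq_lip
  -- the functions Fm i and their properties
  set Fm : Fin n → EuclideanSpace ℝ (Fin n) → ℝ := fun i x => (ξ x * ξ x) * g i x with hFmdef
  have hFlip : ∀ i, ∃ Ki : NNReal, LipschitzWith Ki (Fm i) := fun i =>
    lipschitz_mul Ks hKs hsq_supp (hgdiff i) (hgfc i)
  have hFsupp : ∀ i, HasCompactSupport (Fm i) := by
    intro i
    apply HasCompactSupport.mono' hsupp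
    intro x hx
    apply subset_tsupport
    simp only [Function.mem_support, ne_eq] at hx ⊢
    intro h0
    apply hx
    simp [hFmdef, h0]
  have hibp : ∀ i, ∫ x, fderiv ℝ (Fm i) x (e i) = 0 := by
    intro i
    obtain ⟨Ki, hKi⟩ := hFlip i
    exact ibp_dir (Fm i) Ki hKi (hFsupp i) (e i)
  set H : Fin n → EuclideanSpace ℝ (Fin n) → ℝ := fun i x => fderiv ℝ (Fm i) x (e i) with hHdef
  have hHint : ∀ i, Integrable (H i) := by
    intro i
    obtain ⟨Ki, hKi⟩ := hFlip i
    apply aux_integrable ((measurable_fderiv_apply_const ℝ (Fm i) (e i)).aestronglyMeasurable)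
      (hFsupp i) (C := (Ki:ℝ) * ‖e i‖)
    intro x
    by_cases hx : x ∈ tsupport (Fm i)
    · rw [Set.indicator_of_mem hx]
      calc ‖H i x‖ ≤ ‖fderiv ℝ (Fm i) x‖ * ‖e i‖ := (fderiv ℝ (Fm i) x).le_opNorm _
        _ ≤ (Ki:ℝ) * ‖e i‖ :=
          mul_le_mul_of_nonneg_right (norm_fderiv_le_of_lipschitz ℝ hKi) (norm_nonneg _)
    · rw [Set.indicator_of_notMem hx]
      have h0 : fderiv ℝ (Fm i) x = 0 := fderiv_zero_of_nmem_tsupport hx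
      show ‖(fderiv ℝ (Fm i) x) (e i)‖ ≤ 0
      rw [h0]
      simp
  -- gradient ξ norm bound and integrability of ‖∇ξ‖²
  have hgradξ_norm : ∀ x, ‖gradient ξ x‖ ≤ (K:ℝ) := by
    intro x
    rw [gradient, LinearIsometryEquiv.norm_map]
    exact norm_fderiv_le_of_lipschitz ℝ hξ
  have hgradξ_meas : Measurable (fun x => gradient ξ x) :=
    ((InnerProductSpace.toDual ℝ
      (EuclideanSpace ℝ (Fin n))).symm.continuous.measurable).comp (measurable_fderiv ℝ ξ)
  have hBint : Integrable (fun x => ‖gradient ξ x‖^2) := by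
    apply aux_integrable ((hgradξ_meas.norm.pow_const 2).aestronglyMeasurable) hsupp
      (C := (K:ℝ)^2)
    intro x
    by_cases hx : x ∈ tsupport ξ
    · rw [Set.indicator_of_mem hx, Real.norm_eq_abs, abs_of_nonneg (by positivity)]
      exact pow_le_pow_left₀ (norm_nonneg _) (hgradξ_norm x) 2
    · rw [Set.indicator_of_notMem hx]
      have : gradient ξ x = 0 := by
        rw [gradient, fderiv_zero_of_nmem_tsupport hx, map_zero]
      simp [this]
  -- integrability of the main quantities
  have hgradφc : Continuous fun x => ‖gradient φ x‖^2 :=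
    (((InnerProductSpace.toDual ℝ
      (EuclideanSpace ℝ (Fin n))).symm.continuous.comp hΦc).norm).pow 2
  have hAint : Integrable (fun x => ‖gradient φ x‖^2 * ξ x^2) := by
    apply Continuous.integrable_of_hasCompactSupport (hgradφc.mul (hξc.pow 2))
    apply HasCompactSupport.mono' hsupp
    intro x hx
    apply subset_tsupport
    simp only [Function.mem_support, ne_eq] at hx ⊢
    intro h0
    apply hx
    simp [h0]
  set Δ : EuclideanSpace ℝ (Fin n) → ℝ :=
    fun x => ∑ i, fderiv ℝ (fderiv ℝ φ) x (e i) (e i) with hΔdef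
  have hΔc : Continuous Δ := by
    apply continuous_finset_sum
    intro i _
    exact (ContinuousLinearMap.apply ℝ ℝ (e i)).continuous.comp
      (((ContinuousLinearMap.apply ℝ (EuclideanSpace ℝ (Fin n) →L[ℝ] ℝ) (e i)).continuous).comp
        hD2c)
  have hCint : Integrable (fun x => (ξ x * ξ x) * Δ x) := by
    apply Continuous.integrable_of_hasCompactSupport ((hξc.mul hξc).mul hΔc)
    apply HasCompactSupport.mono' hsupp
    intro x hx
    apply subset_tsupport
    simp only [Function.mem_support, ne_eq] at hx ⊢
    intro h0
    apply hx
    simp [h0]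
  -- the a.e. identity
  set Sm : EuclideanSpace ℝ (Fin n) → ℝ :=
    fun x => ∑ i, (fderiv ℝ ξ x (e i)) * g i x with hSmdef
  have hae : ∀ᵐ x, (∑ i, H i x) = 2 * ξ x * Sm x + (ξ x * ξ x) * Δ x := by
    filter_upwards [hξ.ae_differentiableAt (μ := volume)] with x hx
    have hξD := hx.hasFDerivAt
    have hsq : HasFDerivAt (fun y => ξ y * ξ y)
        (ξ x • fderiv ℝ ξ x + ξ x • fderiv ℝ ξ x) x := hξD.mul hξD
    have hHx : ∀ i, H i x = (ξ x * ξ x) * (fderiv ℝ (fderiv ℝ φ) x (e i) (e i))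
        + g i x * (2 * ξ x * fderiv ℝ ξ x (e i)) := by
      intro i
      have hFD : HasFDerivAt (Fm i)
          ((ξ x * ξ x) • ((ContinuousLinearMap.apply ℝ ℝ (e i)).comp
            (fderiv ℝ (fderiv ℝ φ) x))
          + g i x • (ξ x • fderiv ℝ ξ x + ξ x • fderiv ℝ ξ x)) x := hsq.mul (hgD i x)
      simp only [hHdef]
      rw [hFD.fderiv]
      simp only [ContinuousLinearMap.add_apply, ContinuousLinearMap.coe_smul',
        Pi.smul_apply, ContinuousLinearMap.coe_comp', Function.comp_apply,
        ContinuousLinearMap.apply_apply, smul_eq_mul]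
      ring
    calc (∑ i, H i x)
        = ∑ i, ((ξ x * ξ x) * (fderiv ℝ (fderiv ℝ φ) x (e i) (e i))
          + g i x * (2 * ξ x * fderiv ℝ ξ x (e i))) :=
          Finset.sum_congr rfl fun i _ => hHx i
      _ = 2 * ξ x * Sm x + (ξ x * ξ x) * Δ x := by
          have e1 : ∑ i, (ξ x * ξ x) * (fderiv ℝ (fderiv ℝ φ) x (e i) (e i))
              = (ξ x * ξ x) * Δ x := by
            simp only [hΔdef]
            rw [Finset.mul_sum]
          have e2 : ∑ i, g i x * (2 * ξ x * fderiv ℝ ξ x (e i)) = 2 * ξ x * Sm x := by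
            simp only [hSmdef]
            rw [Finset.mul_sum]
            exact Finset.sum_congr rfl fun i _ => by ring
          rw [Finset.sum_add_distrib, e1, e2, add_comm]
  -- integral identities
  have hsum_int : Integrable (fun x => ∑ i, H i x) :=
    integrable_finset_sum _ (fun i _ => hHint i)
  have h2ξS_int : Integrable (fun x => 2 * ξ x * Sm x) := by
    have heq : (fun x => (∑ i, H i x) - (ξ x * ξ x) * Δ x) =ᵐ[volume]
        (fun x => 2 * ξ x * Sm x) := by
      filter_upwards [hae] with x hx
      rw [hx]
      ring
    exact (hsum_int.sub hCint).congr heq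
  have hzero : ∫ x, (2 * ξ x * Sm x + (ξ x * ξ x) * Δ x) = 0 := by
    have heq : (fun x => 2 * ξ x * Sm x + (ξ x * ξ x) * Δ x) =ᵐ[volume]
        (fun x => ∑ i, H i x) := by
      filter_upwards [hae] with x hx
      rw [hx]
    calc ∫ x, (2 * ξ x * Sm x + (ξ x * ξ x) * Δ x) = ∫ x, ∑ i, H i x :=
          integral_congr_ae heq
      _ = ∑ i, ∫ x, H i x := integral_finset_sum _ (fun i _ => hHint i)
      _ = 0 := by
          apply Finset.sum_eq_zero
          intro i _
          exact hibp i
  have hsplit : (∫ x, 2 * ξ x * Sm x) + ∫ x, (ξ x * ξ x) * Δ x = 0 := by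
    rw [← integral_add h2ξS_int hCint]
    exact hzero
  -- step 1 : ∫ ‖∇φ‖² ξ² ≤ ∫ ξ² Δ
  have hstep1 : ∫ x, ‖gradient φ x‖^2 * ξ x^2 ≤ ∫ x, (ξ x * ξ x) * Δ x := by
    apply integral_mono hAint hCint
    intro x
    have h1 : ‖gradient φ x‖^2 ≤ Δ x := by
      calc ‖gradient φ x‖^2
          ≤ ∑ i, iteratedFDeriv ℝ 2 φ x
            ![EuclideanSpace.single i (1:ℝ), EuclideanSpace.single i (1:ℝ)] := hineq x
        _ = Δ x := by
            simp only [hΔdef]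
            exact Finset.sum_congr rfl fun i _ => hsecond x i
    have h2 : (0:ℝ) ≤ ξ x^2 := sq_nonneg _
    calc ‖gradient φ x‖^2 * ξ x^2 ≤ Δ x * ξ x^2 := mul_le_mul_of_nonneg_right h1 h2
      _ = (ξ x * ξ x) * Δ x := by ring
  -- Sm is the inner product of the gradients
  have hSinner : ∀ x, Sm x = (inner ℝ (gradient ξ x) (gradient φ x) : ℝ) := by
    intro x
    simp only [hSmdef]
    rw [PiLp.inner_apply]
    apply Finset.sum_congr rfl
    intro i _
    rw [hgrad_apply ξ x i, hgrad_apply φ x i]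
    simp only [hgdef, RCLike.inner_apply, conj_trivial]
    ring
  -- pointwise bound
  have hptwise : ∀ x, -(2 * ξ x * Sm x)
      ≤ (1/2) * (‖gradient φ x‖^2 * ξ x^2) + 2 * ‖gradient ξ x‖^2 := by
    intro x
    have habs : |Sm x| ≤ ‖gradient ξ x‖ * ‖gradient φ x‖ := by
      rw [hSinner x]
      exact abs_real_inner_le_norm _ _
    have h1 : -(2 * ξ x * Sm x) ≤ 2 * |ξ x| * (‖gradient ξ x‖ * ‖gradient φ x‖) := by
      have h2 : -(2 * ξ x * Sm x) ≤ |2 * ξ x * Sm x| := neg_le_abs _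
      have h3 : |2 * ξ x * Sm x| = 2 * |ξ x| * |Sm x| := by
        rw [abs_mul, abs_mul]
        simp [abs_of_nonneg]
      rw [h3] at h2
      refine h2.trans ?_
      apply mul_le_mul_of_nonneg_left habs (by positivity)
    refine h1.trans ?_
    nlinarith [sq_nonneg (|ξ x| * ‖gradient φ x‖ - 2 * ‖gradient ξ x‖), sq_abs (ξ x),
      abs_nonneg (ξ x), norm_nonneg (gradient ξ x), norm_nonneg (gradient φ x)]
  -- step 3
  have hRHSint : Integrable (fun x =>
      (1/2) * (‖gradient φ x‖^2 * ξ x^2) + 2 * ‖gradient ξ x‖^2) :=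
    (hAint.const_mul _).add (hBint.const_mul _)
  have hstep3 : ∫ x, -(2 * ξ x * Sm x)
      ≤ ∫ x, ((1/2) * (‖gradient φ x‖^2 * ξ x^2) + 2 * ‖gradient ξ x‖^2) :=
    integral_mono h2ξS_int.neg hRHSint (fun x => hptwise x)
  have hneg : ∫ x, -(2 * ξ x * Sm x) = - ∫ x, 2 * ξ x * Sm x := integral_neg _
  have hsplit2 : ∫ x, ((1/2) * (‖gradient φ x‖^2 * ξ x^2) + 2 * ‖gradient ξ x‖^2)
      = (1/2) * (∫ x, ‖gradient φ x‖^2 * ξ x^2) + 2 * ∫ x, ‖gradient ξ x‖^2 := by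
    rw [integral_add (hAint.const_mul _) (hBint.const_mul _), integral_const_mul,
      integral_const_mul]
  linarith [hstep1, hsplit, hstep3, hneg, hsplit2]
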